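/- Let M = (W,R), s₀ ∈ W, and suppose M, ∅, s₀ satisfies the conjunction of formulas (1) s, (2) □¬s, (3) □□(k → s), and (6) □(◇⊤ → ◇sw) (the switch-creating conjuncts of Grid). Then for every w with R s₀ w and such that w has an R-successor, there exists a state v (a 'switch state' for w) with: R w v; v ∉ {s₀, w}; v sees a dead end (there is y with R v y and y has no successor); R v w; and every R-successor u of v that itself has an R-successor equals w. -/
import Mathlib


/-- Formulas of the memory logic B(⟨r⟩,k):  F ::= k | ¬F | F ∧ F | ◇F. -/
inductive MForm : Type
  | known : MForm
  | neg : MForm → MForm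
  | conj : MForm → MForm → MForm
  | dia : MForm → MForm
deriving DecidableEq

namespace MForm

def disj (φ ψ : MForm) : MForm := neg (conj (neg φ) (neg ψ))
def impl (φ ψ : MForm) : MForm := neg (conj φ (neg ψ))
def box (φ : MForm) : MForm := neg (dia (neg φ))
def bot : MForm := conj known (neg known)
def top : MForm := disj known (neg known)

end MForm

/-- Satisfaction for B(⟨r⟩,k) on a Kripke frame (W, R), at state `w`, with memory `S`.
`◇` is the remember-and-move operator: the current state is added to the memory. -/
def MSat {W : Type*} (R : W → W → Prop) : Set W → W → MForm → Prop
  | S, w, .known => w ∈ S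
  | S, w, .neg φ => ¬ MSat R S w φ
  | S, w, .conj φ ψ => MSat R S w φ ∧ MSat R S w ψ
  | S, w, .dia φ => ∃ t, R w t ∧ MSat R (S ∪ {w}) t φ

/-- A formula is satisfiable iff it holds at some state of some frame with empty initial memory. -/
def MSatisfiable (φ : MForm) : Prop :=
  ∃ (W : Type) (R : W → W → Prop) (s : W), MSat R ∅ s φ

namespace MForm

/-- The macro s ≡ ◇□⊥ : "the current state sees a dead end". -/
def sees : MForm := dia (box bot)

/-- a-or-b ≡ k ∧ ◇(k ∧ ¬s). -/
def aorb : MForm := conj known (dia (conj known (neg sees)))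

/-- c ≡ k ∧ □(k → s). -/
def cmac : MForm := conj known (box (impl known sees))

/-- The formula `Inf`, the conjunction of the seven conjuncts (1)–(7). -/
def infF : MForm :=
  conj sees <|                                                              -- (1) s
  conj (box (neg sees)) <|                                                  -- (2) □¬s
  conj (box (box (impl known sees))) <|                                     -- (3) □□(k → s)
  conj (dia (dia known)) <|                                                 -- (4) ◇◇k
  conj (box (impl (dia top) (dia (conj (neg known) (neg sees))))) <|        -- (5)
  conj (box (box (impl (neg sees)
        (dia (conj known (conj sees (dia (conj known (box (impl known sees)))))))))) <|  -- (6)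
  box (box (impl (neg sees) (box (impl (neg sees)
        (dia (conj known (conj sees (box (impl aorb (dia cmac))))))))))     -- (7)

end MForm

/-- A state `x` "sees a dead end": some successor of `x` has no successor. -/
def seesDeadEnd {W : Type*} (R : W → W → Prop) (x : W) : Prop :=
  ∃ y, R x y ∧ ∀ z, ¬ R y z

/-- A tile type: a quadruple of colors (top, bottom, left, right), colors from ℕ. -/
structure Tile where
  top : ℕ
  bottom : ℕ
  left : ℕ
  right : ℕ
deriving DecidableEq

/-- `T` tiles ℕ×ℕ: there is a tiling function matching colors to the right and above. -/
def TilesPlane (T : List Tile) : Prop :=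
  ∃ f : ℕ × ℕ → Fin T.length, ∀ x y : ℕ,
    (T.get (f (x, y))).right = (T.get (f (x + 1, y))).left ∧
    (T.get (f (x, y))).top = (T.get (f (x, y + 1))).bottom

namespace MForm

def bigConj : List MForm → MForm
  | [] => top
  | φ :: l => conj φ (bigConj l)

def bigDisj : List MForm → MForm
  | [] => bot
  | φ :: l => disj φ (bigDisj l)

/-- `n` nested ◇. -/
def diaN : ℕ → MForm → MForm
  | 0, φ => φ
  | n + 1, φ => dia (diaN n φ)

/-- Positive occurrence of the propositional macro with assigned number `n`:
◇(s ∧ ¬k ∧ □¬k ∧ ◇ⁿ□⊥). -/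
def prop (n : ℕ) : MForm :=
  dia (conj sees (conj (neg known) (conj (box (neg known)) (diaN n (box bot)))))

/-- sw ≡ ¬k ∧ s ∧ ◇(k ∧ ¬s) ∧ □(◇⊤ → (k ∧ ¬s ∧ □((s ∧ ◇k) → k))). -/
def sw : MForm :=
  conj (neg known) (conj sees (conj (dia (conj known (neg sees)))
    (box (impl (dia top)
      (conj known (conj (neg sees) (box (impl (conj sees (dia known)) known))))))))

/-- ®'φ ≡ □((¬k ∧ s) → □(k → φ)). -/
def rem (φ : MForm) : MForm := box (impl (conj (neg known) sees) (box (impl known φ)))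

/-- k' ≡ k ∧ □((s ∧ ◇k) → k). -/
def kn' : MForm := conj known (box (impl (conj sees (dia known)) known))

/-- The formula Grid(T), conjunction of the conjuncts (1)–(17) encoding the
tiling problem for the list of tile types `T`.  The propositional symbols
0,1,2,u,r,t₁,…,t_k are assigned the distinct positive numbers 1,2,3,4,5,6,…,5+k. -/
def gridF (T : List Tile) : MForm :=
  -- propositional macros for the grid counters 0,1,2 and for u, r and the tiles
  let iP : ℕ → MForm := fun i => prop (i % 3 + 1)
  let uP : MForm := prop 4
  let rP : MForm := prop 5
  let tP : Fin T.length → MForm := fun n => prop (6 + n.val)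
  let si : ℕ → ℕ := fun i => (i + 1) % 3
  let pi : ℕ → ℕ := fun i => (i + 2) % 3
  let range3 : List ℕ := [0, 1, 2]
  bigConj [
    -- (1) s
    sees,
    -- (2) □¬s
    box (neg sees),
    -- (3) □□(k → s)
    box (box (impl known sees)),
    -- (4) □(◇⊤ → ◇k)
    box (impl (dia top) (dia known)),
    -- (5) □□(¬s → ◇(k ∧ ¬s))
    box (box (impl (neg sees) (dia (conj known (neg sees))))),
    -- (6) □(◇⊤ → ◇sw)
    box (impl (dia top) (dia sw)),
    -- (7) □□(¬s → ◇sw)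
    box (box (impl (neg sees) (dia sw))),
    -- (8) □□(¬s → ®'□□((k ∧ s) → ◇k'))
    box (box (impl (neg sees) (rem (box (box (impl (conj known sees) (dia kn'))))))),
    -- (9) ⋀_i □((◇⊤ ∧ i) → ◇(¬s ∧ u ∧ ◇(¬s ∧ s(i))))
    bigConj (range3.map fun i =>
      box (impl (conj (dia top) (iP i))
        (dia (conj (neg sees) (conj uP (dia (conj (neg sees) (iP (si i))))))))),
    -- (10) ⋀_i □((◇⊤ ∧ i) → ◇(¬s ∧ r ∧ ◇(¬s ∧ p(i))))
    bigConj (range3.map fun i =>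
      box (impl (conj (dia top) (iP i))
        (dia (conj (neg sees) (conj rP (dia (conj (neg sees) (iP (pi i))))))))),
    -- (11) up is irreflexive and functional
    bigConj (range3.map fun i =>
      box (impl (conj (dia top) (iP (si i)))
        (rem (box (impl (conj (neg sees) uP)
          (box (impl (conj (neg sees) (iP i))
            (conj (neg known)
              (box (impl (conj (neg sees) uP)
                (box (impl (conj (neg sees) (iP (si i))) kn')))))))))))),
    -- (12) right is irreflexive and functional
    bigConj (range3.map fun i =>
      box (impl (conj (dia top) (iP (pi i)))
        (rem (box (impl (conj (neg sees) rP)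
          (box (impl (conj (neg sees) (iP i))
            (conj (neg known)
              (box (impl (conj (neg sees) rP)
                (box (impl (conj (neg sees) (iP (pi i))) kn')))))))))))),
    -- (13) confluence
    bigConj (range3.map fun i =>
      box (impl (conj (dia top) (iP (si i)))
        (rem (box (impl (conj (neg sees) uP)
          (box (impl (conj (neg sees) (iP i))
            (box (impl (conj (neg sees) rP)
              (box (impl (conj (neg sees) (iP (pi i)))
                (dia (conj (neg sees) (conj uP
                  (dia (conj (neg sees) (conj (iP i)
                    (dia (conj (neg sees) (conj rP
                      (dia (conj (neg sees) (conj (iP (si i)) kn'))))))))))))))))))))))),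
    -- (14) exactly one tile per grid state
    bigConj (range3.map fun i =>
      box (impl (conj (dia top) (iP i))
        (conj (bigDisj ((List.finRange T.length).map tP))
          (bigConj ((List.finRange T.length).flatMap fun n =>
            ((List.finRange T.length).filter fun m => decide (n < m)).map fun m =>
              neg (conj (tP n) (tP m))))))),
    -- (15) vertical matching
    bigConj (range3.flatMap fun i => (List.finRange T.length).map fun n =>
      box (impl (conj (dia top) (conj (iP i) (tP n)))
        (box (impl (conj (neg sees) uP)
          (box (impl (conj (neg sees) (iP (si i)))
            (bigDisj (((List.finRange T.length).filter fun m =>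
              decide ((T.get n).top = (T.get m).bottom)).map tP)))))))),
    -- (16) horizontal matching
    bigConj (range3.flatMap fun i => (List.finRange T.length).map fun n =>
      box (impl (conj (dia top) (conj (iP i) (tP n)))
        (box (impl (conj (neg sees) rP)
          (box (impl (conj (neg sees) (iP (pi i)))
            (bigDisj (((List.finRange T.length).filter fun m =>
              decide ((T.get n).right = (T.get m).left)).map tP)))))))),
    -- (17) ◇(◇⊤ ∧ 0)
    dia (conj (dia top) (iP 0))
  ]

end MForm

open MForm

section Helpers
variable {W : Type*} (R : W → W → Prop) (S : Set W) (x : W)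

lemma msat_bot_iff : MSat R S x MForm.bot ↔ False := by
  simp [MForm.bot, MSat]

lemma msat_top (R : W → W → Prop) (S : Set W) (x : W) : MSat R S x MForm.top := by
  simp [MForm.top, MForm.disj, MSat]

lemma msat_dia_iff (φ : MForm) :
    MSat R S x (dia φ) ↔ ∃ t, R x t ∧ MSat R (S ∪ {x}) t φ := Iff.rfl

lemma msat_box_iff (φ : MForm) :
    MSat R S x (box φ) ↔ ∀ t, R x t → MSat R (S ∪ {x}) t φ := by
  simp only [MForm.box, MSat, not_exists, not_and, not_not]

lemma msat_impl_iff (φ ψ : MForm) :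
    MSat R S x (impl φ ψ) ↔ (MSat R S x φ → MSat R S x ψ) := by
  simp only [MForm.impl, MSat, not_and, not_not]

lemma msat_sees_iff : MSat R S x sees ↔ seesDeadEnd R x := by
  rw [sees, msat_dia_iff]
  constructor
  · rintro ⟨t, ht, hb⟩
    rw [msat_box_iff] at hb
    exact ⟨t, ht, fun z hz => (msat_bot_iff R _ z).mp (hb z hz)⟩
  · rintro ⟨t, ht, hd⟩
    exact ⟨t, ht, (msat_box_iff R _ t MForm.bot).mpr fun z hz => absurd hz (hd z)⟩

end Helpers

/-- from conjuncts (1) s, (2) □¬s, (3) □□(k → s) and (6) □(◇⊤ → ◇sw)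
of Grid, every successor w of the spy that has a successor has a switch state v:
R w v; v ∉ {s₀, w}; v sees a dead end; R v w; and every successor of v that has a
successor is w itself. -/
theorem switch_states_exist {W : Type*} (R : W → W → Prop) (s₀ : W)
    (h : MSat R ∅ s₀ (conj sees (conj (box (neg sees))
      (conj (box (box (impl known sees))) (box (impl (dia top) (dia sw))))))) :
    ∀ w, R s₀ w → (∃ z, R w z) →
      ∃ v, R w v ∧ v ≠ s₀ ∧ v ≠ w ∧ seesDeadEnd R v ∧ R v w ∧
        ∀ u, R v u → (∃ z, R u z) → u = w := by
  obtain ⟨h1, h2, h3, h6⟩ := h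
  rintro w hsw ⟨z, hwz⟩
  have hs0 : seesDeadEnd R s₀ := (msat_sees_iff R ∅ s₀).mp h1
  rw [msat_box_iff] at h6
  have h6w : MSat R (∅ ∪ {s₀}) w (dia sw) :=
    (msat_impl_iff R _ w _ _).mp (h6 w hsw) ⟨z, hwz, msat_top R _ z⟩
  obtain ⟨v, hwv, hvk, hvs, hv3, hv4⟩ := h6w
  have hvne0 : v ≠ s₀ := fun e => hvk (Or.inl (Or.inr e))
  have hvnew : v ≠ w := fun e => hvk (Or.inr e)
  have hvde : seesDeadEnd R v := (msat_sees_iff R _ v).mp hvs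
  have hvw : R v w := by
    obtain ⟨t, hvt, htk, hts⟩ := hv3
    have htmem : t ∈ (∅ ∪ {s₀} ∪ {w} ∪ {v} : Set W) := htk
    have hts' : ¬ seesDeadEnd R t := fun hh => hts ((msat_sees_iff R _ t).mpr hh)
    rcases htmem with (((h0 | h0) | h0) | h0)
    · exact absurd h0 (by simp)
    · exact absurd hs0 (h0 ▸ hts')
    · exact h0 ▸ hvt
    · exact absurd hvde (h0 ▸ hts')
  refine ⟨v, hwv, hvne0, hvnew, hvde, hvw, ?_⟩
  rintro u hvu ⟨z', huz'⟩
  rw [msat_box_iff] at hv4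
  have h4u := (msat_impl_iff R _ u _ _).mp (hv4 u hvu) ⟨z', huz', msat_top R _ z'⟩
  obtain ⟨huk, hus, -⟩ := h4u
  have humem : u ∈ (∅ ∪ {s₀} ∪ {w} ∪ {v} : Set W) := huk
  have hus' : ¬ seesDeadEnd R u := fun hh => hus ((msat_sees_iff R _ u).mpr hh)
  rcases humem with (((h0 | h0) | h0) | h0)
  · exact absurd h0 (by simp)
  · exact absurd hs0 (h0 ▸ hus')
  · exact h0
  · exact absurd hvde (h0 ▸ hus')
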